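/- If the two step ratios are equal, τ' = τ, and 0 < τ ≤ 1.0315, then the stability coefficient of the filtered diffusion term is strictly positive: 1 + 2γ₃ − 2γ₂ − 2γ₁ > 0. (This is the coefficient positivity underlying the paper's claim that the BDF2-TF scheme is stable whenever the step ratio satisfies 0 < τₙ ≤ 1.0315.) -/

import Mathlib

/-- BDF2-TF γ-coefficients. -/
noncomputable def gamma3 (τ τ' : ℝ) : ℝ :=
  τ * τ' * (1 + τ) / ((1 + 2 * τ) * (1 + τ' * (1 + τ)))
noncomputable def gamma2 (τ τ' : ℝ) : ℝ :=
  τ ^ 2 * τ' * (1 + τ) * (1 + τ' * (2 + τ)) /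
    ((1 + 2 * τ) * (1 + τ') * (1 + τ' * (1 + τ)))
noncomputable def gamma1 (τ τ' : ℝ) : ℝ :=
  τ ^ 2 * τ' ^ 3 * (1 + τ) ^ 2 / ((1 + 2 * τ) * (1 + τ') * (1 + τ' * (1 + τ)))

/-!
At equal step ratios the coefficient clears to `N τ / ((1 + 2τ)(1 + τ)(1 + τ(1 + τ)))`
with a positive denominator, so everything rests on the septic numerator `N`. For
`c = 1.0315` one has `N τ - N c = (c - τ) Q τ` where every coefficient of `Q` is positive,
hence `N τ ≥ N c ≈ 0.0023 > 0` on `[0, c]`; the largest real root of `N` is `≈ 1.031533`,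
which is where the bound `1.0315` comes from.
-/

def filteredDiffusionNumerator (τ : ℝ) : ℝ :=
  1 + 4 * τ + 8 * τ ^ 2 + 7 * τ ^ 3 - 2 * τ ^ 4 - 8 * τ ^ 5 - 6 * τ ^ 6 - 2 * τ ^ 7

lemma one_add_two_gamma3_sub_two_gamma2_sub_two_gamma1_self {τ : ℝ}
    (h2 : 1 + 2 * τ ≠ 0) (h1 : 1 + τ ≠ 0) :
    1 + 2 * gamma3 τ τ - 2 * gamma2 τ τ - 2 * gamma1 τ τ =
      filteredDiffusionNumerator τ / ((1 + 2 * τ) * (1 + τ) * (1 + τ * (1 + τ))) := by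
  have h3 : 1 + τ * (1 + τ) ≠ 0 := by nlinarith [sq_nonneg (τ + 1 / 2)]
  unfold gamma3 gamma2 gamma1 filteredDiffusionNumerator
  field_simp
  ring

lemma filteredDiffusionNumerator_pos {τ : ℝ} (h0 : 0 ≤ τ) (h1 : τ ≤ 1.0315) :
    0 < filteredDiffusionNumerator τ := by
  have hc : 0 ≤ 1.0315 - τ := sub_nonneg.2 h1
  unfold filteredDiffusionNumerator
  nlinarith [mul_nonneg hc h0, mul_nonneg hc (pow_nonneg h0 2), mul_nonneg hc (pow_nonneg h0 3),
    mul_nonneg hc (pow_nonneg h0 4), mul_nonneg hc (pow_nonneg h0 5),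
    mul_nonneg hc (pow_nonneg h0 6)]

/-- For equal step ratios `τ' = τ` with `0 < τ ≤ 1.0315`, the stability
coefficient of the filtered diffusion term is strictly positive. -/
theorem bdf2tf_filtered_diffusion_coefficient_positive
    (τ τ' : ℝ) (heq : τ' = τ) (h0 : 0 < τ) (h1 : τ ≤ 1.0315) :
    0 < 1 + 2 * gamma3 τ τ' - 2 * gamma2 τ τ' - 2 * gamma1 τ τ' := by
  subst τ'
  have h2 : 0 < 1 + 2 * τ := by linarith
  have h1' : 0 < 1 + τ := by linarith
  rw [one_add_two_gamma3_sub_two_gamma2_sub_two_gamma1_self h2.ne' h1'.ne']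
  exact div_pos (filteredDiffusionNumerator_pos h0.le h1) (by positivity)
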